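/- arXiv:1304.3292 — 5 statements merged into one kernel-verified Lean document; each statement's English description precedes it below -/
import Mathlib

section
/- Let Γ be a finite group, Y ⊆ Ȳ an inclusion of ℤ[Γ]-lattices with finite quotient Ȳ/Y, and let N denote the norm map ∑_{σ∈Γ} σ. Then there is an exact sequence of abelian groups 0 → (Y/IY)_tor → (Ȳ/IY)_tor → (Ȳ/Y)^N → Y^Γ/N(Y), where the last map sends the class of λ̄ ∈ Ȳ (with Nλ̄ ∈ Y) to N(λ̄) mod N(Y). -/
/-!
A class `x` of `Ȳ` is torsion modulo `IY` exactly when its norm vanishes. One direction holds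
because the norm kills `IY` and `Ȳ` is torsion-free. For the other, with `m = [Ȳ : Y]` we have
`m • x ∈ Y`, and `|Γ| • m • x = N(m • x) - ∑ σ, (σ • m • x - m • x)` lies in `IY`. All three
exactness statements follow from this characterization and from `IY ≤ Y`.
-/

section Augmentation

variable (Γ : Type*) {M : Type*} [Group Γ] [AddCommGroup M] [DistribMulAction Γ M]

def augmentationSubgroup (Y : AddSubgroup M) : AddSubgroup M :=
  AddSubgroup.closure {x | ∃ σ : Γ, ∃ y ∈ Y, x = σ • y - y}

variable {Γ} {Y : AddSubgroup M}

theorem augmentationSubgroup_le (hstab : ∀ σ : Γ, ∀ y ∈ Y, σ • y ∈ Y) :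
    augmentationSubgroup Γ Y ≤ Y := by
  refine (AddSubgroup.closure_le _).mpr ?_
  rintro _ ⟨σ, y, hy, rfl⟩
  exact sub_mem (hstab σ y hy) hy

variable [Fintype Γ]

variable (Γ M) in
def actionNorm : M →+ M := ∑ σ : Γ, DistribSMul.toAddMonoidHom M σ

theorem actionNorm_apply (x : M) : actionNorm Γ M x = ∑ σ : Γ, σ • x := by
  simp [actionNorm]

theorem actionNorm_smul (σ : Γ) (x : M) : actionNorm Γ M (σ • x) = actionNorm Γ M x := by
  simp only [actionNorm_apply, smul_smul]
  exact Equiv.sum_comp (Equiv.mulRight σ) (· • x)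

theorem augmentationSubgroup_le_ker_actionNorm :
    augmentationSubgroup Γ Y ≤ (actionNorm Γ M).ker := by
  refine (AddSubgroup.closure_le _).mpr ?_
  rintro _ ⟨σ, y, -, rfl⟩
  simp [actionNorm_smul]

theorem card_nsmul_eq_actionNorm_sub_sum (x : M) :
    Fintype.card Γ • x = actionNorm Γ M x - ∑ σ : Γ, (σ • x - x) := by
  rw [Finset.sum_sub_distrib, actionNorm_apply, Finset.sum_const, Finset.card_univ, sub_sub_cancel]

theorem card_nsmul_mem_augmentationSubgroup {y : M} (hy : y ∈ Y) (hNy : actionNorm Γ M y = 0) :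
    Fintype.card Γ • y ∈ augmentationSubgroup Γ Y := by
  rw [card_nsmul_eq_actionNorm_sub_sum, hNy, zero_sub]
  exact neg_mem <| AddSubgroup.sum_mem _ fun σ _ ↦ AddSubgroup.subset_closure ⟨σ, y, hy, rfl⟩

theorem exists_nsmul_mem_augmentationSubgroup_iff [IsAddTorsionFree M] [Finite (M ⧸ Y)] {x : M} :
    (∃ n : ℕ, 0 < n ∧ n • x ∈ augmentationSubgroup Γ Y) ↔ actionNorm Γ M x = 0 := by
  constructor
  · rintro ⟨n, hn, hnx⟩
    rw [← nsmul_eq_zero_iff_right hn.ne', ← map_nsmul]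
    exact augmentationSubgroup_le_ker_actionNorm hnx
  · intro hNx
    have hindex := Nat.pos_of_ne_zero (AddSubgroup.index_ne_zero_of_finite (H := Y))
    refine ⟨Y.index * Fintype.card Γ, Nat.mul_pos hindex Fintype.card_pos, ?_⟩
    rw [mul_nsmul]
    exact card_nsmul_mem_augmentationSubgroup (Y.nsmul_index_mem x)
      (by rw [map_nsmul, hNx, nsmul_zero])

end Augmentation

theorem stmt1_general (Γ : Type*) [Group Γ] [Fintype Γ]
    (Ybar : Type*) [AddCommGroup Ybar] [DistribMulAction Γ Ybar]
    [Module.Free ℤ Ybar]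
    (Y : AddSubgroup Ybar) (hstab : ∀ (σ : Γ), ∀ y ∈ Y, σ • y ∈ Y)
    (hfin : Finite (Ybar ⧸ Y))
    (N : Ybar →+ Ybar) (hN : ∀ x : Ybar, N x = ∑ σ : Γ, σ • x)
    (IY : AddSubgroup Ybar)
    (hIY : IY = AddSubgroup.closure {x : Ybar | ∃ (σ : Γ), ∃ y ∈ Y, x = σ • y - y}) :
    -- the middle map is well defined: torsion mod `IY` implies norm-killed in `Ȳ/Y`
    (∀ x : Ybar, (∃ n : ℕ, 0 < n ∧ n • x ∈ IY) → N x ∈ Y) ∧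
    -- exactness at `(Ȳ/IY)_tor`
    (∀ x : Ybar, (∃ n : ℕ, 0 < n ∧ n • x ∈ IY) →
      (x ∈ Y ↔ ∃ y ∈ Y, (∃ n : ℕ, 0 < n ∧ n • y ∈ IY) ∧ x - y ∈ IY)) ∧
    -- exactness at `(Ȳ/Y)^N`
    (∀ x : Ybar, N x ∈ Y →
      ((∃ y ∈ Y, N x = N y) ↔ ∃ μ : Ybar, μ - x ∈ Y ∧ ∃ n : ℕ, 0 < n ∧ n • μ ∈ IY)) := by
  have := IsAddTorsionFree.of_isTorsionFree ℤ Ybar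
  obtain rfl : N = actionNorm Γ Ybar :=
    AddMonoidHom.ext fun x ↦ (hN x).trans (actionNorm_apply x).symm
  obtain rfl : IY = augmentationSubgroup Γ Y := hIY
  simp only [exists_nsmul_mem_augmentationSubgroup_iff]
  refine ⟨fun x hx ↦ hx ▸ Y.zero_mem, fun x hx ↦ ⟨fun hxY ↦ ⟨x, hxY, hx, by simp⟩, ?_⟩,
    fun x _ ↦ ⟨?_, ?_⟩⟩
  · rintro ⟨y, hy, -, hxy⟩
    simpa using add_mem (augmentationSubgroup_le hstab hxy) hy
  · rintro ⟨y, hy, hxy⟩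
    exact ⟨x - y, by simpa using Y.neg_mem hy, by rw [map_sub, hxy, sub_self]⟩
  · rintro ⟨μ, hμx, hNμ⟩
    exact ⟨x - μ, by simpa using Y.neg_mem hμx, by rw [map_sub, hNμ, sub_zero]⟩

/-- For a finite group `Γ` and an inclusion `Y ⊆ Ȳ` of `ℤ[Γ]`-lattices
with finite quotient, the sequence
`0 → (Y/IY)_tor → (Ȳ/IY)_tor → (Ȳ/Y)^N → Y^Γ/N(Y)` is exact, where the last map sends
the class of `λ̄` (with `N λ̄ ∈ Y`) to `N λ̄ mod N(Y)`.  We express this at the level of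
elements of `Ȳ`:
* (well-definedness) a class torsion modulo `IY` is killed by the norm in `Ȳ/Y`;
* (exactness at `(Ȳ/IY)_tor`) a torsion class dies in `Ȳ/Y` iff it comes from `Y`;
* (exactness at `(Ȳ/Y)^N`) a norm-killed class of `Ȳ/Y` has `N λ̄ ∈ N(Y)` iff it lifts
  to a torsion class of `Ȳ/IY`. -/
theorem stmt1 (Γ : Type*) [Group Γ] [Fintype Γ]
    (Ybar : Type*) [AddCommGroup Ybar] [DistribMulAction Γ Ybar]
    [Module.Free ℤ Ybar] [Module.Finite ℤ Ybar]
    (Y : AddSubgroup Ybar) (hstab : ∀ (σ : Γ), ∀ y ∈ Y, σ • y ∈ Y)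
    (hfin : Finite (Ybar ⧸ Y))
    (N : Ybar →+ Ybar) (hN : ∀ x : Ybar, N x = ∑ σ : Γ, σ • x)
    (IY : AddSubgroup Ybar)
    (hIY : IY = AddSubgroup.closure {x : Ybar | ∃ (σ : Γ), ∃ y ∈ Y, x = σ • y - y}) :
    -- the middle map is well defined: torsion mod `IY` implies norm-killed in `Ȳ/Y`
    (∀ x : Ybar, (∃ n : ℕ, 0 < n ∧ n • x ∈ IY) → N x ∈ Y) ∧
    -- exactness at `(Ȳ/IY)_tor`
    (∀ x : Ybar, (∃ n : ℕ, 0 < n ∧ n • x ∈ IY) →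
      (x ∈ Y ↔ ∃ y ∈ Y, (∃ n : ℕ, 0 < n ∧ n • y ∈ IY) ∧ x - y ∈ IY)) ∧
    -- exactness at `(Ȳ/Y)^N`
    (∀ x : Ybar, N x ∈ Y →
      ((∃ y ∈ Y, N x = N y) ↔ ∃ μ : Ybar, μ - x ∈ Y ∧ ∃ n : ℕ, 0 < n ∧ n • μ ∈ IY)) :=
  stmt1_general Γ Ybar Y hstab hfin N hN IY hIY
end

section
/- Let Δ be a group, Θ a quotient of Δ, A a Δ-module, B a Θ-module, and for i > j' ≥ j > 0 let f ∈ C^{i,j'}(Δ,Θ,A) be a homogeneous i-cochain of Δ valued in A whose values are unchanged under multiplying any of its last j' variables by elements of ker(Δ→Θ), and let g ∈ C^{-j}(Θ,B) be a homogeneous Tate (−j)-cochain. Define (f ⊔ g)(g_0,…,g_{i−j}) = ∑_{(s_1,…,s_j)∈Θ^j} f(g_0,…,g_{i−j},s_1,…,s_j) ⊗ g(s_1^*,…,s_j^*). Then d(f ⊔ g) = df ⊔ g + (−1)^i (f ⊔ dg). -/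
/-! Evaluate `df` at `(g₀,…,g_n, sec s)` and split off the face that deletes the last variable.
Paired with `g(s)` and summed over `s`, the remaining faces give `d(f ⊔ g)`, while the split-off
face gives `±∑ₛ f(g₀,…,g_n) ⊗ g(s) = ±(f ∪ dg)(g₀,…,g_n)`, since the Tate differential of a
`(-1)`-cochain is the norm; the two signs `(-1)^(i+1)` and `(-1)^i` cancel. -/

namespace Stmt4

variable {Δ Θ : Type*} [Group Δ] [Group Θ] [Fintype Θ]
variable {A B M : Type*} [AddCommGroup A] [AddCommGroup B] [AddCommGroup M]

/-- The differential on homogeneous `n`-cochains of `Δ` (valued in any abelian group). -/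
def dHom {X : Type*} [AddCommGroup X] (n : ℕ) (f : (Fin (n + 1) → Δ) → X) :
    (Fin (n + 2) → Δ) → X :=
  fun v => ∑ k : Fin (n + 2), (-1 : ℤ) ^ (k : ℕ) • f (v ∘ Fin.succAbove k)

/-- The unbalanced cup product of a homogeneous `n`-cochain of `Δ` with a homogeneous
Tate `(-1)`-cochain of `Θ`:
`(f ⊔ g)(g₀,…,g_{n-1}) = ∑_{s ∈ Θ} f(g₀,…,g_{n-1},s) ⊗ g(s)`. -/
def sqcup (pair : A → B → M) (sec : Θ → Δ) {n : ℕ}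
    (f : (Fin (n + 1) → Δ) → A) (g : Θ → B) : (Fin n → Δ) → M :=
  fun v => ∑ s : Θ, pair (f (Fin.snoc v (sec s))) (g s)

/-- The (ordinary) cup product of a homogeneous `n`-cochain of `Δ` with a homogeneous
`0`-cochain of `Θ`: `(f ∪ c)(g₀,…,g_n) = f(g₀,…,g_n) ⊗ c(g_n)`. -/
def cupZero (pair : A → B → M) (π : Δ →* Θ) {n : ℕ}
    (f : (Fin (n + 1) → Δ) → A) (c : Θ → B) : (Fin (n + 1) → Δ) → M :=
  fun v => pair (f v) (c (π (v (Fin.last n))))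

/-- The Tate differential `C^{-1}(Θ,B) → C^{0}(Θ,B)`: the norm map. -/
def dTate (g : Θ → B) : Θ → B := fun _ => ∑ t : Θ, g t

variable {X : Type*}

theorem snoc_comp_castSucc_succAbove {n : ℕ} (v : Fin (n + 1) → X) (x : X) (k : Fin (n + 1)) :
    (Fin.snoc v x : Fin (n + 2) → X) ∘ k.castSucc.succAbove = Fin.snoc (v ∘ k.succAbove) x := by
  funext i
  refine Fin.lastCases ?_ (fun j => ?_) i
  · rw [Function.comp_apply, Fin.succAbove_castSucc_of_le _ _ (Fin.le_last k), Fin.succ_last]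
    simp
  · simp [Fin.castSucc_succAbove_castSucc]

theorem snoc_comp_last_succAbove {n : ℕ} (v : Fin n → X) (x : X) :
    (Fin.snoc v x : Fin (n + 1) → X) ∘ (Fin.last n).succAbove = v := by
  rw [Fin.succAbove_last]
  exact Fin.snoc_comp_castSucc

theorem dHom_snoc {G : Type*} [AddCommGroup X] {n : ℕ} (f : (Fin (n + 1) → G) → X)
    (v : Fin (n + 1) → G) (x : G) :
    dHom n f (Fin.snoc v x)
      = ∑ k : Fin (n + 1), (-1 : ℤ) ^ (k : ℕ) • f (Fin.snoc (v ∘ k.succAbove) x)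
        + (-1 : ℤ) ^ (n + 1) • f v := by
  simp only [dHom, Fin.sum_univ_castSucc, Fin.val_castSucc, Fin.val_last,
    snoc_comp_castSucc_succAbove, snoc_comp_last_succAbove]

def mkBiadditive (pair : A → B → M) (hpair₁ : ∀ a a' b, pair (a + a') b = pair a b + pair a' b)
    (hpair₂ : ∀ a b b', pair a (b + b') = pair a b + pair a b') : A →+ B →+ M :=
  AddMonoidHom.mk' (fun a => AddMonoidHom.mk' (pair a) (hpair₂ a))
    (fun a a' => AddMonoidHom.ext (hpair₁ a a'))

theorem sqcup_dHom {G S : Type*} [Fintype S] (pair : A →+ B →+ M) (sec : S → G) {n : ℕ}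
    (f : (Fin (n + 2) → G) → A) (g : S → B) (v : Fin (n + 2) → G) :
    sqcup (pair · ·) sec (dHom (n + 1) f) g v
      = dHom n (sqcup (pair · ·) sec f g) v + (-1 : ℤ) ^ (n + 2) • ∑ s : S, pair (f v) (g s) := by
  simp only [sqcup, dHom_snoc, map_add, map_sum, map_zsmul, AddMonoidHom.add_apply,
    AddMonoidHom.finsetSum_apply, AddMonoidHom.smul_apply]
  rw [Finset.sum_add_distrib, Finset.sum_comm, Finset.smul_sum]
  simp only [dHom, sqcup, Finset.smul_sum]

theorem cupZero_dTate (pair : A →+ B →+ M) (π : Δ →* Θ) {n : ℕ} (f : (Fin (n + 1) → Δ) → A)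
    (g : Θ → B) (v : Fin (n + 1) → Δ) :
    cupZero (pair · ·) π f (dTate g) v = ∑ s : Θ, pair (f v) (g s) :=
  map_sum _ _ _

theorem dHom_sqcup (pair : A →+ B →+ M) (π : Δ →* Θ) (sec : Θ → Δ) {n : ℕ}
    (f : (Fin (n + 2) → Δ) → A) (g : Θ → B) (v : Fin (n + 2) → Δ) :
    dHom n (sqcup (pair · ·) sec f g) v
      = sqcup (pair · ·) sec (dHom (n + 1) f) g v
        + (-1 : ℤ) ^ (n + 1) • cupZero (pair · ·) π f (dTate g) v := by
  rw [sqcup_dHom, cupZero_dTate, add_assoc, ← add_smul]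
  rw [show (-1 : ℤ) ^ (n + 2) + (-1) ^ (n + 1) = 0 by ring, zero_smul, add_zero]

theorem stmt4_general
    (π : Δ →* Θ)
    (sec : Θ → Δ)
    (pair : A → B → M)
    (hpair₁ : ∀ a a' b, pair (a + a') b = pair a b + pair a' b)
    (hpair₂ : ∀ a b b', pair a (b + b') = pair a b + pair a b')
    -- the degree `i = m + 2` and `j' ∈ [1, i)`, so `i > j' ≥ j = 1 > 0`
    (m : ℕ)
    (f : (Fin (m + 3) → Δ) → A)
    (g : Θ → B) :
    ∀ v : Fin (m + 3) → Δ,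
      dHom (m + 1) (sqcup pair sec f g) v
        = sqcup pair sec (dHom (m + 2) f) g v
          + (-1 : ℤ) ^ (m + 2) • cupZero pair π f (dTate g) v :=
  dHom_sqcup (mkBiadditive pair hpair₁ hpair₂) π sec f g

theorem stmt4 [DistribMulAction Δ A] [DistribMulAction Θ B] [DistribMulAction Δ M]
    (π : Δ →* Θ) (hπ : Function.Surjective π)
    (sec : Θ → Δ) (hsec : ∀ t : Θ, π (sec t) = t)
    (pair : A → B → M)
    (hpair₁ : ∀ a a' b, pair (a + a') b = pair a b + pair a' b)
    (hpair₂ : ∀ a b b', pair a (b + b') = pair a b + pair a b')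
    (hpair₃ : ∀ (δ : Δ) a b, pair (δ • a) (π δ • b) = δ • pair a b)
    -- the degree `i = m + 2` and `j' ∈ [1, i)`, so `i > j' ≥ j = 1 > 0`
    (m : ℕ) (j' : ℕ) (hj'₁ : 1 ≤ j') (hj'₂ : j' < m + 2)
    (f : (Fin (m + 3) → Δ) → A)
    -- `f` is a homogeneous cochain (i.e. `Δ`-equivariant)
    (hfequiv : ∀ (δ : Δ) (v : Fin (m + 3) → Δ), f (fun k => δ * v k) = δ • f v)
    -- `f ∈ C^{i,j'}(Δ,Θ,A)`: the values of `f` are unchanged under multiplying any of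
    -- its last `j'` variables by an element of `ker π`
    (hfker : ∀ (v : Fin (m + 3) → Δ) (k : Fin (m + 3)), (m + 3 - j') ≤ (k : ℕ) →
      ∀ u ∈ π.ker, f (Function.update v k (v k * u)) = f v)
    (g : Θ → B)
    -- `g` is a homogeneous Tate `(-1)`-cochain of `Θ`
    (hgequiv : ∀ t s : Θ, g (t * s) = t • g s) :
    ∀ v : Fin (m + 3) → Δ,
      dHom (m + 1) (sqcup pair sec f g) v
        = sqcup pair sec (dHom (m + 2) f) g v
          + (-1 : ℤ) ^ (m + 2) • cupZero pair π f (dTate g) v :=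
  stmt4_general π sec pair hpair₁ hpair₂ m f g

end Stmt4
end

section
/- Let E/F be a finite Galois extension of fields of characteristic zero with group Γ_{E/F}, and let n be a positive integer. Restriction along the 'evaluation at the identity' (equivalently composition with the diagonal torsor map δ_e) gives a group isomorphism Hom(u_{E/F,n}, Z)^Γ ≅ Hom(μ_n, Z)^{N_{E/F}} from the Γ-invariant algebraic homomorphisms out of u_{E/F,n} to the homomorphisms μ_n → Z killed by the norm N_{E/F}. -/
/-!
An equivariant map `ψ : M → (Γ → A)` into the coinduced module is determined by its value at the
identity, `ψ m τ = ψ (τ⁻¹ • m) 1` (Frobenius reciprocity), and every `g : M →+ A` arises this way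
from `m ↦ (τ ↦ g (τ⁻¹ • m))`. Reindexing by `τ ↦ τ⁻¹` turns the augmentation sum `∑ τ, ψ m τ`
into the norm `∑ σ, g (σ • m)`, so the two vanishing conditions correspond.
-/

section Coinduction

variable {Γ M A : Type*} [Group Γ] [AddCommMonoid M] [DistribMulAction Γ M] [AddCommMonoid A]

def coinduceHom (g : M →+ A) : M →+ (Γ → A) :=
  AddMonoidHom.pi fun τ => g.comp (DistribSMul.toAddMonoidHom M τ⁻¹)

@[simp]
theorem coinduceHom_apply (g : M →+ A) (m : M) (τ : Γ) : coinduceHom g m τ = g (τ⁻¹ • m) :=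
  rfl

theorem coinduceHom_smul (g : M →+ A) (σ : Γ) (m : M) (τ : Γ) :
    coinduceHom g (σ • m) τ = coinduceHom g m (σ⁻¹ * τ) := by
  simp [smul_smul]

theorem evalOne_comp_coinduceHom (g : M →+ A) :
    (Pi.evalAddMonoidHom (fun _ : Γ => A) 1).comp (coinduceHom g) = g := by
  ext m
  simp

theorem coinduceHom_evalOne_comp {ψ : M →+ (Γ → A)}
    (hψ : ∀ (σ : Γ) (m : M) (τ : Γ), ψ (σ • m) τ = ψ m (σ⁻¹ * τ)) :
    coinduceHom ((Pi.evalAddMonoidHom (fun _ : Γ => A) 1).comp ψ) = ψ := by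
  ext m τ
  simp [hψ]

theorem sum_coinduceHom_apply [Fintype Γ] (g : M →+ A) (m : M) :
    ∑ τ : Γ, coinduceHom g m τ = ∑ σ : Γ, g (σ • m) :=
  Fintype.sum_equiv (Equiv.inv Γ) _ _ fun _ => rfl

end Coinduction

/-- (Isomorphism `Hom(u_{E/F,n}, Z)^Γ ≅ Hom(μ_n, Z)^{N_{E/F}}`, in
terms of character modules.)  Let `Γ = Γ_{E/F}` be a finite group, `n > 0`, and `M` a
`Γ`-module (the character module `X^*(Z)` of the finite multiplicative group `Z`).
Model `X^*(Res_{E/F} μ_n) = ℤ/nℤ[Γ]` as the functions `Γ → ℤ/nℤ` with `Γ` acting by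
left translation, so that `X^*(u_{E/F,n})` is its augmentation kernel.  Then
"evaluation at the identity" (i.e. composition with `δ_e`) is a bijection from the
`Γ`-equivariant homomorphisms landing in the augmentation kernel to the homomorphisms
`g : M → ℤ/nℤ` killed by the norm, `∑_{σ ∈ Γ} σ·g = 0`. -/
theorem stmt6 (Γ : Type*) [Group Γ] [Fintype Γ] (n : ℕ)
    (M : Type*) [AddCommGroup M] [DistribMulAction Γ M] :
    ∃ e : {ψ : M →+ (Γ → ZMod n) //
            (∀ m : M, ∑ σ : Γ, ψ m σ = 0) ∧
            (∀ (σ : Γ) (m : M) (τ : Γ), ψ (σ • m) τ = ψ m (σ⁻¹ * τ))} ≃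
          {g : M →+ ZMod n // ∀ m : M, ∑ σ : Γ, g (σ • m) = 0},
      (∀ (ψ) (m : M), (e ψ).1 m = ψ.1 m 1) ∧
      (∀ ψ₁ ψ₂, (e ⟨ψ₁.1 + ψ₂.1, by
          constructor
          · intro m
            simpa [Finset.sum_add_distrib] using by
              rw [ψ₁.2.1 m, ψ₂.2.1 m, add_zero]
          · intro σ m τ
            simp [ψ₁.2.2 σ m τ, ψ₂.2.2 σ m τ]⟩).1
        = (e ψ₁).1 + (e ψ₂).1) := by
  let evalOne := Pi.evalAddMonoidHom (fun _ : Γ => ZMod n) 1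
  refine ⟨
    { toFun := fun ψ => ⟨evalOne.comp ψ.1, fun m => by
        rw [← sum_coinduceHom_apply, coinduceHom_evalOne_comp ψ.2.2]
        exact ψ.2.1 m⟩
      invFun := fun g =>
        ⟨coinduceHom g.1, fun m => (sum_coinduceHom_apply g.1 m).trans (g.2 m),
          coinduceHom_smul g.1⟩
      left_inv := fun ψ => Subtype.ext (coinduceHom_evalOne_comp ψ.2.2)
      right_inv := fun g => Subtype.ext (evalOne_comp_coinduceHom g.1) },
    fun _ _ => rfl, fun _ _ => rfl⟩
end

section
/- Let 1 → u → W → Γ → 1 be an extension of (pro)finite groups with u abelian, let G be a group with Γ-action (inflated to W, so u acts trivially on G), and let Z be a central subgroup of G on which Γ acts. For a 1-cocycle z: W → G whose restriction to u lands in Z, and a continuous section s: Γ → W with associated 2-cocycle ξ(σ,τ) = s(σ)s(τ)s(στ)^{-1} ∈ u: the 1-cochain c(σ) = z(s(σ)) on Γ valued in G satisfies, for the induced cocycle a ∈ Z^1(Γ, G/Z), that the connecting 2-cocycle dc ∈ Z^2(Γ, Z) (image of a under the connecting map for 1 → Z → G → G/Z → 1 computed with lift c) equals (σ,τ) ↦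 z(ξ(σ,τ)). -/
/-!
Since `z` is a cocycle, `z (v * w⁻¹) = z v * (z w)⁻¹` whenever `v` and `w` have the same image
in `Γ`. Applied to `v = s σ * s τ` and `w = s (σ * τ)`, and expanding `z (s σ * s τ)` by the
cocycle rule, this turns `z (ξ (σ, τ))` into `dc (σ, τ)`; as `ξ (σ, τ) ∈ u`, it lies in `Z`.
-/

section NonabelianCocycle

variable {W Γ G : Type*} [Group W] [Group Γ] [Group G] [MulDistribMulAction Γ G]
  {π : W →* Γ} {z : W → G}

theorem cocycle_map_one (hz : ∀ v w : W, z (v * w) = z v * (π v) • z w) : z 1 = 1 := by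
  simpa using hz 1 1

theorem cocycle_map_mul_inv_of_map_eq (hz : ∀ v w : W, z (v * w) = z v * (π v) • z w)
    {v w : W} (hvw : π v = π w) : z (v * w⁻¹) = z v * (z w)⁻¹ := by
  have hw : π w • z w⁻¹ = (z w)⁻¹ := by
    rw [← mul_right_inj (z w), ← hz, mul_inv_cancel, mul_inv_cancel, cocycle_map_one hz]
  rw [hz, hvw, hw]

end NonabelianCocycle

theorem stmt10_general {W Γ G : Type*} [Group W] [Group Γ] [Group G]
    [MulDistribMulAction Γ G]
    (π : W →* Γ)
    (Z : Subgroup G)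
    (z : W → G)
    -- `z` is a 1-cocycle of `W` valued in `G`, with `W` acting through `Γ`
    (hz : ∀ v w : W, z (v * w) = z v * (π v) • z w)
    -- whose restriction to `u = ker π` has image in `Z`
    (hzu : ∀ k ∈ π.ker, z k ∈ Z)
    (s : Γ → W) (hs : ∀ γ : Γ, π (s γ) = γ) :
    ∀ σ τ : Γ,
      z (s σ) * σ • z (s τ) * (z (s (σ * τ)))⁻¹ ∈ Z ∧
      z (s σ) * σ • z (s τ) * (z (s (σ * τ)))⁻¹
        = z (s σ * s τ * (s (σ * τ))⁻¹) := by
  intro σ τ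
  have hξ : z (s σ * s τ * (s (σ * τ))⁻¹) = z (s σ) * σ • z (s τ) * (z (s (σ * τ)))⁻¹ := by
    rw [cocycle_map_mul_inv_of_map_eq hz (by simp only [map_mul, hs]), hz, hs]
  have hξ_mem_ker : s σ * s τ * (s (σ * τ))⁻¹ ∈ π.ker := by
    simp only [MonoidHom.mem_ker, map_mul, map_inv, hs, mul_inv_cancel]
  exact ⟨hξ ▸ hzu _ hξ_mem_ker, hξ.symm⟩

/-- Let `1 → u → W → Γ → 1` be an extension with `u = ker π` abelian,
let `G` be a group with a `Γ`-action (inflated to `W`), `Z` a central, `Γ`-stable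
subgroup of `G`, and `z : W → G` a 1-cocycle whose restriction to `u` lands in `Z`.
Let `s : Γ → W` be a section with 2-cocycle `ξ(σ,τ) = s(σ)s(τ)s(στ)⁻¹ ∈ u`.  Then the
1-cochain `c(σ) = z(s(σ))` on `Γ` satisfies: its connecting 2-cocycle
`dc(σ,τ) = c(σ)·σ(c(τ))·c(στ)⁻¹` takes values in `Z` and equals `z(ξ(σ,τ))`. -/
theorem stmt10 {W Γ G : Type*} [Group W] [Group Γ] [Group G]
    [MulDistribMulAction Γ G]
    (π : W →* Γ) (hπ : Function.Surjective π)
    (hab : ∀ x ∈ π.ker, ∀ y ∈ π.ker, x * y = y * x)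
    (Z : Subgroup G) (hZcentral : Z ≤ Subgroup.center G)
    (hZstable : ∀ (γ : Γ), ∀ x ∈ Z, γ • x ∈ Z)
    (z : W → G)
    -- `z` is a 1-cocycle of `W` valued in `G`, with `W` acting through `Γ`
    (hz : ∀ v w : W, z (v * w) = z v * (π v) • z w)
    -- whose restriction to `u = ker π` has image in `Z`
    (hzu : ∀ k ∈ π.ker, z k ∈ Z)
    (s : Γ → W) (hs : ∀ γ : Γ, π (s γ) = γ) :
    ∀ σ τ : Γ,
      z (s σ) * σ • z (s τ) * (z (s (σ * τ)))⁻¹ ∈ Z ∧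
      z (s σ) * σ • z (s τ) * (z (s (σ * τ)))⁻¹
        = z (s σ * s τ * (s (σ * τ))⁻¹) :=
  stmt10_general π Z z hz hzu s hs
end

section
/- Let Δ be a normal subgroup of a finite group Γ₁ with quotient Γ = Γ₁/Δ, let A be a Γ₁-module written multiplicatively, ζ: Γ → Γ₁ a set-theoretic section, and c₁ ∈ Z²(Γ₁, A) a 2-cocycle such that c₁(w, z) = c₁(w, zζ(x)) for all w, z ∈ Δ, x ∈ Γ. Suppose further that c(x,y) := ∏_{v∈Δ} c₁(vζ(x), ζ(y)) defines a function on Γ². Then for all σ, τ ∈ Γ₁ with images σ̄, τ̄ ∈ Γ: ∏_{v∈Δ} c₁(vσ, ζ(τ̄)) = ∏_{v∈Δ} c₁(σ, vτ)·c₁(σ, v)^{-1}. -/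
/-!
Conjugation by `σ` permutes `Δ`, so the left side equals `∏_v c₁(σv, ζ(τ̄))`. Since
`c₁(v, ζ(τ̄)) = c₁(v, 1) = 1` for `v ∈ Δ` by (eq:ck), the cocycle relation at `(σ, v, ζ(τ̄))`
gives `c₁(σv, ζ(τ̄)) = c₁(σ, vζ(τ̄)) · c₁(σ, v)⁻¹`. Finally `vζ(τ̄)` runs over the coset `Δτ`
as `v` runs over `Δ`.
-/

open Finset

namespace Subgroup

variable {G M : Type*} [Group G] [CommMonoid M] (H : Subgroup G) [Fintype H] (f : G → M)

theorem prod_mul_right_eq_prod_mul_left [H.Normal] (g : G) :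
    ∏ v : H, f (v * g) = ∏ v : H, f (g * v) :=
  Fintype.prod_equiv (MulAut.conjNormal g⁻¹).toEquiv _ _ fun v => by
    simp [mul_assoc]

theorem prod_mul_right_eq_of_mul_inv_mem {g g' : G} (h : g * g'⁻¹ ∈ H) :
    ∏ v : H, f (v * g) = ∏ v : H, f (v * g') :=
  Fintype.prod_equiv (Equiv.mulRight ⟨g * g'⁻¹, h⟩) _ _ fun v => by
    simp [mul_assoc]

end Subgroup

theorem cocycle_mul_left_of_eq_one {G A : Type*} [Group G] [CommGroup A]
    [MulDistribMulAction G A] {c : G → G → A} {a b d : G}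
    (hcoc : c a b * c (a * b) d = a • c b d * c a (b * d)) (hbd : c b d = 1) :
    c (a * b) d = c a (b * d) * (c a b)⁻¹ := by
  rw [hbd, smul_one, one_mul] at hcoc
  rw [← hcoc, mul_inv_cancel_comm]

/-- (Second equality of the lemma on compatible fundamental
cocycles.)  Let `Δ ⊴ Γ₁` be a finite normal subgroup with quotient `Γ = Γ₁/Δ`, `A` a
multiplicative `Γ₁`-module, and `c₁ ∈ Z²(Γ₁, A)` a normalized 2-cocycle satisfying
`c₁(w, z) = c₁(w, z·ζ(x))` for all `w, z ∈ Δ` and `x ∈ Γ` (equation (eq:ck)), where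
`ζ : Γ → Γ₁` is a set-theoretic section.  Then for all `σ, τ ∈ Γ₁`:
`∏_{v∈Δ} c₁(vσ, ζ(τ̄)) = ∏_{v∈Δ} c₁(σ, vτ)·c₁(σ, v)⁻¹`. -/
theorem stmt16 {Γ₁ : Type*} [Group Γ₁] (Δ : Subgroup Γ₁) [Δ.Normal] [Fintype Δ]
    {A : Type*} [CommGroup A] [MulDistribMulAction Γ₁ A]
    (c₁ : Γ₁ → Γ₁ → A)
    -- the 2-cocycle condition
    (hcoc : ∀ a b c : Γ₁, c₁ a b * c₁ (a * b) c = a • c₁ b c * c₁ a (b * c))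
    -- normalization
    (hnorm : ∀ a : Γ₁, c₁ a 1 = 1)
    (ζ : Γ₁ ⧸ Δ → Γ₁) (hζ : ∀ x : Γ₁ ⧸ Δ, (ζ x : Γ₁ ⧸ Δ) = x)
    -- equation (eq:ck)
    (hck : ∀ w ∈ Δ, ∀ z ∈ Δ, ∀ x : Γ₁ ⧸ Δ, c₁ w z = c₁ w (z * ζ x)) :
    ∀ σ τ : Γ₁,
      ∏ v : Δ, c₁ ((v : Γ₁) * σ) (ζ (τ : Γ₁ ⧸ Δ))
        = ∏ v : Δ, c₁ σ ((v : Γ₁) * τ) * (c₁ σ (v : Γ₁))⁻¹ := by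
  intro σ τ
  have hΔ : ∀ v : Δ, c₁ v (ζ τ) = 1 := fun v => by
    simpa [hnorm] using (hck v v.2 1 Δ.one_mem τ).symm
  have hτ : τ * (ζ τ)⁻¹ ∈ Δ := by
    rw [← QuotientGroup.eq_one_iff, QuotientGroup.mk_mul, QuotientGroup.mk_inv, hζ,
      mul_inv_cancel]
  calc ∏ v : Δ, c₁ ((v : Γ₁) * σ) (ζ τ)
      = ∏ v : Δ, c₁ (σ * v) (ζ τ) := Δ.prod_mul_right_eq_prod_mul_left (c₁ · (ζ τ)) σ
    _ = ∏ v : Δ, c₁ σ ((v : Γ₁) * ζ τ) * (c₁ σ v)⁻¹ :=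
        Fintype.prod_congr _ _ fun v => cocycle_mul_left_of_eq_one (hcoc σ v (ζ τ)) (hΔ v)
    _ = ∏ v : Δ, c₁ σ ((v : Γ₁) * τ) * (c₁ σ v)⁻¹ := by
        rw [prod_mul_distrib, prod_mul_distrib, Δ.prod_mul_right_eq_of_mul_inv_mem (c₁ σ) hτ]
end
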